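/- Let G be a connected graph with at least one edge. Then l(G) = 1 if and only if G is a path graph. -/

import Mathlib

/-- The transformation of `{1,…,n}` sending `a` to `b` and fixing all other points. -/
def arcT {n : ℕ} (a b : Fin n) : Fin n → Fin n := fun v => if v = a then b else v

/-- The semigroup `⟨D⟩` generated by the arcs of the digraph `D`; transformations act on
the right, so a product `ε₁ε₂⋯ε_k` is the function `ε_k ∘ ⋯ ∘ ε₁`. -/
def genSg {n : ℕ} (D : Set (Fin n × Fin n)) : Set (Fin n → Fin n) :=
  { α | ∃ l : List (Fin n × Fin n), l ≠ [] ∧ (∀ p ∈ l, p ∈ D) ∧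
      α = l.foldl (fun f p => arcT p.1 p.2 ∘ f) id }

/-- The product `x·y` in the right-action convention: apply `x` first, then `y`. -/
def sgMul {n : ℕ} (x y : Fin n → Fin n) : Fin n → Fin n := y ∘ x

/-- The right ideal `xS¹ = {x} ∪ xS`. -/
def rIdeal {n : ℕ} (S : Set (Fin n → Fin n)) (x : Fin n → Fin n) : Set (Fin n → Fin n) :=
  insert x { y | ∃ s ∈ S, y = sgMul x s }

/-- The left ideal `S¹x = {x} ∪ Sx`. -/
def lIdeal {n : ℕ} (S : Set (Fin n → Fin n)) (x : Fin n → Fin n) : Set (Fin n → Fin n) :=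
  insert x { y | ∃ s ∈ S, y = sgMul s x }

/-- The two-sided ideal `S¹xS¹`. -/
def jIdeal {n : ℕ} (S : Set (Fin n → Fin n)) (x : Fin n → Fin n) : Set (Fin n → Fin n) :=
  { y | ∃ s ∈ insert id S, ∃ t ∈ insert id S, y = sgMul s (sgMul x t) }

def RRel {n : ℕ} (S : Set (Fin n → Fin n)) (x y : Fin n → Fin n) : Prop :=
  rIdeal S x = rIdeal S y

def LRel {n : ℕ} (S : Set (Fin n → Fin n)) (x y : Fin n → Fin n) : Prop :=
  lIdeal S x = lIdeal S y

def JRel {n : ℕ} (S : Set (Fin n → Fin n)) (x y : Fin n → Fin n) : Prop :=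
  jIdeal S x = jIdeal S y

def RTrivial {n : ℕ} (S : Set (Fin n → Fin n)) : Prop :=
  ∀ x ∈ S, ∀ y ∈ S, RRel S x y → x = y

def LTrivial {n : ℕ} (S : Set (Fin n → Fin n)) : Prop :=
  ∀ x ∈ S, ∀ y ∈ S, LRel S x y → x = y

def HTrivial {n : ℕ} (S : Set (Fin n → Fin n)) : Prop :=
  ∀ x ∈ S, ∀ y ∈ S, RRel S x y → LRel S x y → x = y

def JTrivial {n : ℕ} (S : Set (Fin n → Fin n)) : Prop :=
  ∀ x ∈ S, ∀ y ∈ S, JRel S x y → x = y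

/-- `α` has a cycle of length `k`: `k` distinct points `a₀,…,a_{k-1}` with
`α(aᵢ) = a_{i+1 mod k}`. -/
def IsCycleOf {n : ℕ} (α : Fin n → Fin n) (k : ℕ) : Prop :=
  0 < k ∧ ∃ a : ZMod k → Fin n, Function.Injective a ∧ ∀ i, α (a i) = a (i + 1)

/-- `l(D)`: the maximal length of a cycle of an element of `⟨D⟩`. -/
noncomputable def lD {n : ℕ} (D : Set (Fin n × Fin n)) : ℕ :=
  sSup { k | ∃ α ∈ genSg D, IsCycleOf α k }

/-- The arc set of a graph. -/
def arcsOf {n : ℕ} (G : SimpleGraph (Fin n)) : Set (Fin n × Fin n) :=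
  { p | G.Adj p.1 p.2 }

/-- `l(G)` for a graph `G`. -/
noncomputable def lG {n : ℕ} (G : SimpleGraph (Fin n)) : ℕ := lD (arcsOf G)

/-- Reachability along directed walks of `D`. -/
def dreach {n : ℕ} (D : Set (Fin n × Fin n)) : Fin n → Fin n → Prop :=
  Relation.ReflTransGen (fun a b => (a, b) ∈ D)

/-- The strong component of the vertex `v`. -/
def strongComp {n : ℕ} (D : Set (Fin n × Fin n)) (v : Fin n) : Set (Fin n) :=
  { u | dreach D u v ∧ dreach D v u }

/-- The underlying graph of the digraph `D`. -/
def underlying {n : ℕ} (D : Set (Fin n × Fin n)) : SimpleGraph (Fin n) where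
  Adj a b := a ≠ b ∧ ((a, b) ∈ D ∨ (b, a) ∈ D)
  symm := ⟨fun a b h => ⟨h.1.symm, h.2.symm⟩⟩
  loopless := ⟨fun a h => h.1 rfl⟩

/-- `v 0, v 1, …, v r` is a cycle of the digraph `D`. -/
def IsDCycle {n : ℕ} (D : Set (Fin n × Fin n)) (r : ℕ) (v : ℕ → Fin n) : Prop :=
  1 ≤ r ∧ v r = v 0 ∧ (∀ i < r, ∀ j < r, v i = v j → i = j) ∧
    ∀ i < r, (v i, v (i + 1)) ∈ D

def HasDCycle {n : ℕ} (D : Set (Fin n × Fin n)) : Prop := ∃ r v, IsDCycle D r v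

def DAcyclic {n : ℕ} (D : Set (Fin n × Fin n)) : Prop := ¬ HasDCycle D

/-- `G` is a subgroup contained in the transformation semigroup `S`. -/
def IsSubgroupIn {n : ℕ} (S G : Set (Fin n → Fin n)) : Prop :=
  G ⊆ S ∧ (∀ x ∈ G, ∀ y ∈ G, sgMul x y ∈ G) ∧
    ∃ e ∈ G, (∀ x ∈ G, sgMul e x = x ∧ sgMul x e = x) ∧
      ∀ x ∈ G, ∃ y ∈ G, sgMul x y = e ∧ sgMul y x = e

/-- Every subgroup of `S` is trivial. -/
def SgAperiodic {n : ℕ} (S : Set (Fin n → Fin n)) : Prop :=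
  ∀ G, IsSubgroupIn S G → G.Subsingleton


/-!
Relabelling a path graph along the path makes every generator `(a→b)`, hence every element of
`⟨G⟩`, monotone, and a monotone self-map of a chain has no cycle of length `≥ 2`. Conversely, if
`l(G) = 1` then `G` has no vertex of degree three (a six-letter word around it swaps two points)
and no cycle (collapsing the arcs of a cycle in reverse order rotates it), and a connected acyclic
graph of maximal degree two is a path.
-/

open Function

section Semigroup

variable {n : ℕ} {D : Set (Fin n × Fin n)}

lemma List.foldl_comp_eq_comp {α β : Type*} (φ : α → β → β) (l : List α) (g : β → β) :
    l.foldl (fun f p => φ p ∘ f) g = l.foldl (fun f p => φ p ∘ f) id ∘ g := by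
  induction l generalizing g with
  | nil => rfl
  | cons p t ih => simp only [List.foldl_cons, ih (φ p ∘ g), ih (φ p ∘ id)]; rfl

lemma arcT_mem_genSg {a b : Fin n} (h : (a, b) ∈ D) : arcT a b ∈ genSg D :=
  ⟨[(a, b)], List.cons_ne_nil _ _, by simpa using h, rfl⟩

lemma comp_mem_genSg {α β : Fin n → Fin n} (hα : α ∈ genSg D) (hβ : β ∈ genSg D) :
    β ∘ α ∈ genSg D := by
  obtain ⟨l₁, hl₁, hD₁, rfl⟩ := hα
  obtain ⟨l₂, -, hD₂, rfl⟩ := hβ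
  refine ⟨l₁ ++ l₂, by simp [hl₁], fun p hp => ?_, ?_⟩
  · rcases List.mem_append.mp hp with hp | hp
    exacts [hD₁ p hp, hD₂ p hp]
  · rw [List.foldl_append]
    exact (List.foldl_comp_eq_comp _ l₂ _).symm

theorem genSg_induction {P : (Fin n → Fin n) → Prop}
    (arcT_mem : ∀ p ∈ D, P (arcT p.1 p.2)) (comp : ∀ α β, P α → P β → P (β ∘ α)) :
    ∀ α ∈ genSg D, P α := by
  have key : ∀ l : List (Fin n × Fin n), (∀ p ∈ l, p ∈ D) →
      ∀ g, P g → P (l.foldl (fun f p => arcT p.1 p.2 ∘ f) g) := by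
    intro l
    induction l with
    | nil => exact fun _ g hg => hg
    | cons q t ih =>
      intro hD g hg
      exact ih (fun r hr => hD r (by simp [hr])) _ (comp g _ hg (arcT_mem q (hD q (by simp))))
  rintro _ ⟨_ | ⟨p, l⟩, hl, hD, rfl⟩
  · exact absurd rfl hl
  exact key l (fun r hr => hD r (by simp [hr])) _ (arcT_mem p (hD p (by simp)))

theorem isCycleOf_iff {α : Fin n → Fin n} {k : ℕ} :
    IsCycleOf α k ↔ ∃ x ∈ periodicPts α, minimalPeriod α x = k := by
  constructor
  · rintro ⟨hk, a, ha, h⟩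
    have hiter : ∀ j : ℕ, α^[j] (a 0) = a j := by
      intro j
      induction j with
      | zero => simp
      | succ j ih => rw [iterate_succ_apply', ih, h]; push_cast; rfl
    have hper : IsPeriodicPt α k (a 0) := by
      simp [IsPeriodicPt, IsFixedPt, hiter]
    refine ⟨a 0, mk_mem_periodicPts hk hper, Nat.dvd_antisymm hper.minimalPeriod_dvd ?_⟩
    have := isPeriodicPt_minimalPeriod α (a 0)
    rw [IsPeriodicPt, IsFixedPt, hiter] at this
    simpa [ZMod.natCast_eq_zero_iff] using ha this
  · rintro ⟨x, hx, rfl⟩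
    have hk := minimalPeriod_pos_of_mem_periodicPts hx
    have : NeZero (minimalPeriod α x) := ⟨hk.ne'⟩
    refine ⟨hk, fun i => α^[i.val] x, fun i j hij => ZMod.val_injective _ ?_, fun i => ?_⟩
    · exact iterate_injOn_Iio_minimalPeriod (ZMod.val_lt i) (ZMod.val_lt j) hij
    · change _ = α^[(i + 1).val] x
      rw [← iterate_succ_apply' α, ← iterate_mod_minimalPeriod_eq, ZMod.val_add,
        ZMod.val_one_eq_one_mod, Nat.add_mod_mod]

/-- `l(D) ≤ 1`, phrased through minimal periods: they are exactly the cycle lengths. -/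
def HasOnlyTrivialCycles (D : Set (Fin n × Fin n)) : Prop :=
  ∀ α ∈ genSg D, periodicPts α ⊆ fixedPoints α

theorem lD_eq_one_iff (hD : D.Nonempty) : lD D = 1 ↔ HasOnlyTrivialCycles D := by
  set S := {k | ∃ α ∈ genSg D, IsCycleOf α k}
  change sSup S = 1 ↔ _
  have hS : ∀ α ∈ genSg D, ∀ x ∈ periodicPts α, minimalPeriod α x ∈ S :=
    fun α hα x hx => ⟨α, hα, isCycleOf_iff.mpr ⟨x, hx, rfl⟩⟩
  have hbdd : BddAbove S := by
    refine ⟨n, fun k ⟨α, _, hk, a, ha, _⟩ => ?_⟩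
    have : NeZero k := ⟨hk.ne'⟩
    simpa [ZMod.card] using Fintype.card_le_of_injective a ha
  constructor
  · intro h α hα x hx
    have hle : minimalPeriod α x ≤ 1 := h ▸ le_csSup hbdd (hS α hα x hx)
    have := minimalPeriod_pos_of_mem_periodicPts hx
    exact minimalPeriod_eq_one_iff_isFixedPt.mp (by omega)
  · intro h
    obtain ⟨⟨a, b⟩, hab⟩ := hD
    suffices S = {1} from this ▸ csSup_singleton 1
    ext k
    constructor
    · rintro ⟨α, hα, hk⟩
      obtain ⟨x, hx, rfl⟩ := isCycleOf_iff.mp hk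
      exact minimalPeriod_eq_one_iff_isFixedPt.mpr (h α hα hx)
    · rintro rfl
      have hfix : IsFixedPt (arcT a b) b := by simp [IsFixedPt, arcT]
      simpa [minimalPeriod_eq_one_iff_isFixedPt.mpr hfix] using
        hS _ (arcT_mem_genSg hab) b (hfix.isPeriodicPt 1 |> mk_mem_periodicPts one_pos)

end Semigroup

theorem Monotone.periodicPts_subset_fixedPoints {β : Type*} [LinearOrder β] {f : β → β}
    (hf : Monotone f) : periodicPts f ⊆ fixedPoints f := by
  rintro x ⟨k, hk, hper⟩
  have hfk : f^[k] x = x := hper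
  rcases le_total x (f x) with hx | hx
  · exact le_antisymm (by simpa [hfk] using hf.monotone_iterate_of_le_map hx hk) hx
  · exact le_antisymm hx (by simpa [hfk] using hf.antitone_iterate_of_map_le hx hk)

lemma monotone_arcT_of_pathGraph_adj {m : ℕ} {a b : Fin m}
    (h : (SimpleGraph.pathGraph m).Adj a b) : Monotone (arcT a b) := by
  rw [SimpleGraph.pathGraph_adj] at h
  intro x y hxy
  simp only [arcT]
  split_ifs <;> simp only [Fin.le_def] at hxy ⊢ <;> omega

lemma comp_arcT_comp_symm {n m : ℕ} (e : Fin n ≃ Fin m) (a b : Fin n) :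
    e ∘ arcT a b ∘ e.symm = arcT (e a) (e b) := by
  funext v
  simp only [comp_apply, arcT, e.symm_apply_eq]
  split_ifs <;> simp

theorem hasOnlyTrivialCycles_of_iso_pathGraph {n m : ℕ} {G : SimpleGraph (Fin n)}
    (e : G ≃g SimpleGraph.pathGraph m) : HasOnlyTrivialCycles (arcsOf G) := by
  have hmono : ∀ α ∈ genSg (arcsOf G), Monotone (e ∘ α ∘ e.symm) := by
    refine genSg_induction (fun p hp => ?_) (fun α β hα hβ => ?_)
    · rw [show e ∘ arcT p.1 p.2 ∘ e.symm = arcT (e p.1) (e p.2) from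
        comp_arcT_comp_symm e.toEquiv _ _]
      exact monotone_arcT_of_pathGraph_adj (e.map_adj_iff.mpr hp)
    · convert hβ.comp hα using 1
      funext v
      simp
  intro α hα x hx
  have hsemi : Semiconj e α (e ∘ α ∘ e.symm) := fun v => by simp
  have hfix := (hmono α hα).periodicPts_subset_fixedPoints (hsemi.mapsTo_periodicPts hx)
  exact e.injective (by simpa [IsFixedPt] using hfix)

namespace SimpleGraph.Walk

variable {n : ℕ} {G : SimpleGraph (Fin n)}

/-- Collapsing the walk's arcs from its last one back to its first moves every vertex of a path
one step forward along it. -/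
def advance : {u w : Fin n} → G.Walk u w → Fin n → Fin n
  | _, _, nil => id
  | u, _, cons (v := v) _ q => arcT u v ∘ q.advance

lemma arcT_comp_advance_mem_genSg {u w a b : Fin n} (q : G.Walk u w) (hab : G.Adj a b) :
    arcT a b ∘ q.advance ∈ genSg (arcsOf G) := by
  induction q generalizing a b with
  | nil => exact arcT_mem_genSg hab
  | cons h q ih => exact comp_mem_genSg (ih h) (arcT_mem_genSg hab)

lemma advance_apply_of_notMem_support {u w x : Fin n} (q : G.Walk u w) (hx : x ∉ q.support) :
    q.advance x = x := by
  induction q with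
  | nil => rfl
  | cons h q ih =>
    simp only [support_cons, List.mem_cons, not_or] at hx
    simp [advance, arcT, ih hx.2, hx.1]

lemma IsPath.advance_getVert {u w : Fin n} {q : G.Walk u w} (hq : q.IsPath) (i : ℕ) :
    q.advance (q.getVert i) = q.getVert (i + 1) := by
  induction q generalizing i with
  | nil => rfl
  | @cons u v w h q ih =>
    rw [cons_isPath_iff] at hq
    cases i with
    | zero => simp [advance, arcT, advance_apply_of_notMem_support q hq.2]
    | succ i =>
      have hne : q.getVert (i + 1) ≠ u := fun he => hq.2 (he ▸ q.getVert_mem_support _)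
      simp [advance, arcT, ih hq.1, hne]

end SimpleGraph.Walk

section Graph

variable {n : ℕ} {G : SimpleGraph (Fin n)}

open SimpleGraph

/-- `(w→u)` after `q.advance` moves `u` around all vertices of `q` except `w`. -/
lemma not_hasOnlyTrivialCycles_of_isPath_of_adj {u w : Fin n} {q : G.Walk u w}
    (hq : q.IsPath) (hlen : 2 ≤ q.length) (hwu : G.Adj w u) :
    ¬ HasOnlyTrivialCycles (arcsOf G) := by
  intro hG
  have h := hG _ (q.arcT_comp_advance_mem_genSg hwu)
  have hstep : ∀ i < q.length, arcT w u (q.advance (q.getVert i))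
      = q.getVert ((i + 1) % q.length) := by
    intro i hi
    rw [hq.advance_getVert]
    rcases (show i + 1 ≤ q.length from hi).eq_or_lt with he | hlt
    · simp [he, arcT]
    · have hne : q.getVert (i + 1) ≠ w := fun he => by
        rw [hq.getVert_eq_end_iff hlt.le] at he
        omega
      simp [arcT, hne, Nat.mod_eq_of_lt hlt]
  have hiter : ∀ j, (arcT w u ∘ q.advance)^[j] u = q.getVert (j % q.length) := by
    intro j
    induction j with
    | zero => simp
    | succ j ih =>
      rw [iterate_succ_apply', ih, comp_apply, hstep _ (Nat.mod_lt _ (by omega)), Nat.mod_add_mod]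
  have hper : u ∈ periodicPts (arcT w u ∘ q.advance) :=
    mk_mem_periodicPts (by omega : 0 < q.length) (by simp [IsPeriodicPt, IsFixedPt, hiter])
  have hfix := h hper
  rw [mem_fixedPoints, IsFixedPt, ← iterate_one (arcT w u ∘ q.advance), hiter,
    Nat.mod_eq_of_lt (by omega), hq.getVert_eq_start_iff (by omega)] at hfix
  exact one_ne_zero hfix

theorem HasOnlyTrivialCycles.isAcyclic (h : HasOnlyTrivialCycles (arcsOf G)) :
    G.IsAcyclic := by
  rintro v (_ | ⟨hadj, q⟩) hc
  · exact hc.not_nil Walk.Nil.nil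
  have hlen := hc.three_le_length
  rw [Walk.cons_isCycle_iff] at hc
  exact not_hasOnlyTrivialCycles_of_isPath_of_adj hc.1 (by simpa using hlen) hadj h

/-- The word `(c→x)(y→c)(c→z)(x→c)(c→y)(z→c)` swaps `c` and `y`. -/
theorem HasOnlyTrivialCycles.eq_or_eq_or_eq_of_adj (h : HasOnlyTrivialCycles (arcsOf G))
    {c x y z : Fin n} (hx : G.Adj c x) (hy : G.Adj c y) (hz : G.Adj c z) :
    x = y ∨ x = z ∨ y = z := by
  by_contra! hne
  obtain ⟨hxy, hxz, hyz⟩ := hne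
  have hcx := hx.ne
  have hcy := hy.ne
  have hcz := hz.ne
  set l : List (Fin n × Fin n) := [(c, x), (y, c), (c, z), (x, c), (c, y), (z, c)]
  set α := l.foldl (fun f p => arcT p.1 p.2 ∘ f) id
  have hα : α ∈ genSg (arcsOf G) := by
    refine ⟨l, by simp [l], fun p hp => ?_, rfl⟩
    simp only [l, List.mem_cons, List.not_mem_nil, or_false] at hp
    rcases hp with rfl | rfl | rfl | rfl | rfl | rfl <;>
      simp [arcsOf, hx, hy, hz, hx.symm, hy.symm, hz.symm]
  have hc : α c = y := by
    simp [α, l, arcT, hxy, hyz, hcx.symm]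
  have hy : α y = c := by
    simp [α, l, arcT, hcy.symm, hcz.symm, hxz.symm]
  have hper : c ∈ periodicPts α := by
    refine mk_mem_periodicPts two_pos ?_
    change α (α c) = c
    rw [hc, hy]
  exact hcy ((h α hα hper).symm.trans hc)

end Graph

namespace SimpleGraph

variable {V : Type*} {G : SimpleGraph V}

lemma exists_isPath_forall_length_le [Finite V] [Nonempty V] :
    ∃ (u v : V) (p : G.Walk u v), p.IsPath ∧
      ∀ (u' v' : V) (q : G.Walk u' v'), q.IsPath → q.length ≤ p.length := by
  have := Fintype.ofFinite V
  set S := {k | ∃ (u v : V) (p : G.Walk u v), p.IsPath ∧ p.length = k}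
  have hbdd : BddAbove S := ⟨Fintype.card V, fun _ ⟨_, _, _, hp, hk⟩ => hk ▸ hp.length_lt.le⟩
  have hne : S.Nonempty := ⟨0, Classical.arbitrary V, _, .nil, .nil, rfl⟩
  obtain ⟨u, v, p, hp, hlen⟩ := Nat.sSup_mem hne hbdd
  exact ⟨u, v, p, hp, fun u' v' q hq => hlen ▸ le_csSup hbdd ⟨u', v', q, hq, rfl⟩⟩

/-- A longest path cannot be extended at its ends, and an inner vertex already has two
neighbours on it, so no edge leaves it. -/
lemma Walk.IsPath.mem_support_of_forall_length_le (hconn : G.Preconnected)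
    (hdeg : ∀ c x y z, G.Adj c x → G.Adj c y → G.Adj c z → x = y ∨ x = z ∨ y = z)
    {u v : V} {p : G.Walk u v} (hp : p.IsPath)
    (hmax : ∀ (u' v' : V) (q : G.Walk u' v'), q.IsPath → q.length ≤ p.length) (x : V) :
    x ∈ p.support := by
  by_contra hx
  obtain ⟨d, -, hd, hd'⟩ := (hconn u x).some.exists_boundary_dart {y | y ∈ p.support}
    p.start_mem_support hx
  obtain ⟨i, hi, hil⟩ := Walk.mem_support_iff_exists_getVert.mp hd
  have hadj : G.Adj (p.getVert i) d.snd := hi ▸ d.adj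
  rcases Nat.eq_zero_or_pos i with rfl | hi0
  · rw [Walk.getVert_zero] at hadj
    have := hmax _ _ (Walk.cons hadj.symm p) ((Walk.cons_isPath_iff _ _).mpr ⟨hp, hd'⟩)
    simp at this
  rcases hil.eq_or_lt with rfl | hil
  · rw [p.getVert_length] at hadj
    have := hmax _ _ (p.concat hadj) (hp.concat hd' hadj)
    simp at this
  have h₁ : G.Adj (p.getVert i) (p.getVert (i - 1)) := by
    simpa [Nat.sub_add_cancel hi0] using (p.adj_getVert_succ (i := i - 1) (by omega)).symm
  rcases hdeg _ _ _ _ h₁ (p.adj_getVert_succ hil) hadj with h | h | h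
  · exact absurd (hp.getVert_injOn (by simp; omega) (by simp; omega) h) (by omega)
  · exact hd' (h ▸ p.getVert_mem_support _)
  · exact hd' (h ▸ p.getVert_mem_support _)

lemma IsAcyclic.adj_getVert_iff (hG : G.IsAcyclic) {u v : V} {p : G.Walk u v} (hp : p.IsPath)
    {i j : ℕ} (hi : i ≤ p.length) (hj : j ≤ p.length) :
    G.Adj (p.getVert i) (p.getVert j) ↔ i + 1 = j ∨ j + 1 = i := by
  have key : ∀ {i j}, i < j → j ≤ p.length → G.Adj (p.getVert i) (p.getVert j) → i + 1 = j := by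
    intro i j hij hj hadj
    have hmem : p.getVert j ∈ (p.drop i).support := by
      rw [show j = i + (j - i) by omega, ← Walk.drop_getVert]
      exact Walk.getVert_mem_support _ _
    have hsnd := hG.eq_snd_of_adj_start (hp.drop i) hadj hmem
    rw [Walk.snd, Walk.drop_getVert] at hsnd
    exact (hp.getVert_injOn (by simp; omega) (by simp; omega) hsnd).symm
  constructor
  · intro hadj
    rcases lt_trichotomy i j with hij | rfl | hij
    · exact .inl (key hij hj hadj)
    · exact absurd rfl hadj.ne
    · exact .inr (key hij hi hadj.symm)
  · rintro (rfl | rfl)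
    · exact p.adj_getVert_succ (by omega)
    · exact (p.adj_getVert_succ (by omega)).symm

theorem exists_iso_pathGraph [Finite V] (hconn : G.Connected) (hacyc : G.IsAcyclic)
    (hdeg : ∀ c x y z, G.Adj c x → G.Adj c y → G.Adj c z → x = y ∨ x = z ∨ y = z) :
    ∃ m, Nonempty (G ≃g pathGraph m) := by
  have := hconn.nonempty
  obtain ⟨u, v, p, hp, hmax⟩ := exists_isPath_forall_length_le (G := G)
  have hbij : Bijective (fun i : Fin (p.length + 1) => p.getVert i) := by
    refine ⟨fun i j h => Fin.ext (hp.getVert_injOn (by simp; omega) (by simp; omega) h),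
      fun x => ?_⟩
    obtain ⟨i, hi, hil⟩ := Walk.mem_support_iff_exists_getVert.mp
      (hp.mem_support_of_forall_length_le hconn.preconnected hdeg hmax x)
    exact ⟨⟨i, by omega⟩, hi⟩
  refine ⟨p.length + 1, ⟨(RelIso.mk (Equiv.ofBijective _ hbij) fun {i j} => ?_).symm⟩⟩
  rw [Equiv.ofBijective_apply, Equiv.ofBijective_apply, pathGraph_adj,
    hacyc.adj_getVert_iff hp (by omega) (by omega)]

end SimpleGraph

/-- A connected graph with an edge satisfies `l(G) = 1` iff it is a
path graph. -/
theorem stmt7 (n : ℕ) (G : SimpleGraph (Fin n)) (hconn : G.Connected)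
    (hedge : ∃ u v, G.Adj u v) :
    lG G = 1 ↔ ∃ m : ℕ, Nonempty (G ≃g SimpleGraph.pathGraph m) := by
  obtain ⟨u, v, huv⟩ := hedge
  rw [lG, lD_eq_one_iff ⟨(u, v), huv⟩]
  constructor
  · intro h
    exact SimpleGraph.exists_iso_pathGraph hconn h.isAcyclic
      fun _ _ _ _ => h.eq_or_eq_or_eq_of_adj
  · rintro ⟨m, ⟨e⟩⟩
    exact hasOnlyTrivialCycles_of_iso_pathGraph e
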